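/- Let g be a Lie 2-algebra with standard maximal torus t, let ξ, η ∈ Δ be distinct t-roots, and let x ∈ g_ξ be such that η(x^{[2]}) ≠ 0 (where η is extended to h by η|_n = 0). Then the restriction of ad(x) to g_η is an injective linear map from g_η into g_{ξ+η}. -/

import Mathlib

/-- A 2-map on a Lie algebra over the field `F` (char 2 version of a restricted structure):
`(c • x)^[2] = c^2 • x^[2]`, `ad (x^[2]) = (ad x) ∘ (ad x)` and
`(x+y)^[2] = x^[2] + y^[2] + [x,y]`. -/
structure IsTwoMap (F : Type*) [Field F] {g : Type*} [LieRing g] [LieAlgebra F g]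
    (p : g → g) : Prop where
  smul_pow : ∀ (c : F) (x : g), p (c • x) = (c ^ 2) • p x
  ad_pow : ∀ x y : g, ⁅p x, y⁆ = ⁅x, ⁅x, y⁆⁆
  add_pow : ∀ x y : g, p (x + y) = p x + p y + ⁅x, y⁆

/-- An element is 2-nilpotent if some iterate of the 2-map annihilates it. -/
def IsTwoNilpotent {g : Type*} [Zero g] (p : g → g) (x : g) : Prop :=
  ∃ k : ℕ, p^[k] x = 0

/-- A torus of a Lie 2-algebra: a Lie subalgebra closed under the 2-map on which the
2-map is invertible (bijective). -/
def IsTorus (F : Type*) [Field F] {g : Type*} [LieRing g] [LieAlgebra F g]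
    (p : g → g) (t : LieSubalgebra F g) : Prop :=
  (∀ x ∈ t, p x ∈ t) ∧ Set.BijOn p (t : Set g) (t : Set g)

/-- A maximal torus of a Lie 2-algebra. -/
def IsMaxTorus (F : Type*) [Field F] {g : Type*} [LieRing g] [LieAlgebra F g]
    (p : g → g) (t : LieSubalgebra F g) : Prop :=
  IsTorus F p t ∧ ∀ s : LieSubalgebra F g, IsTorus F p s → t ≤ s → s = t

/-- The weight (root) space of a linear functional `lam` on a torus `t`:
`g_lam = {v | [x, v] = lam x • v for all x ∈ t}`. -/
def rootSpace {F : Type*} [Field F] {g : Type*} [LieRing g] [LieAlgebra F g]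
    (t : LieSubalgebra F g) (lam : Module.Dual F t) : Submodule F g where
  carrier := {v | ∀ x : t, ⁅(x : g), v⁆ = lam x • v}
  add_mem' := by
    intro a b ha hb x
    rw [lie_add, ha x, hb x, smul_add]
  zero_mem' := by
    intro x
    rw [lie_zero, smul_zero]
  smul_mem' := by
    intro c v hv x
    rw [lie_smul, hv x, smul_comm]

/-- The set of `t`-roots: nonzero functionals with nonzero root space. -/
def rootSet {F : Type*} [Field F] {g : Type*} [LieRing g] [LieAlgebra F g]
    (t : LieSubalgebra F g) : Set (Module.Dual F t) :=
  {lam | lam ≠ 0 ∧ rootSpace t lam ≠ ⊥}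

/-- The subspace `N(σ, δ) = {x ∈ g_σ : [x, g_σ] ⊆ n and [[x, g_δ], g_{σ+δ}] ⊆ n}`,
given as `Nspace n g_σ g_δ g_{σ+δ}`. -/
def Nspace {F : Type*} [Field F] {g : Type*} [LieRing g] [LieAlgebra F g]
    (n gs gd gsd : Submodule F g) : Submodule F g where
  carrier := {x | x ∈ gs ∧ (∀ y ∈ gs, ⁅x, y⁆ ∈ n) ∧ ∀ z ∈ gd, ∀ w ∈ gsd, ⁅⁅x, z⁆, w⁆ ∈ n}
  add_mem' := by
    intro a b ha hb
    obtain ⟨ha1, ha2, ha3⟩ := ha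
    obtain ⟨hb1, hb2, hb3⟩ := hb
    refine ⟨gs.add_mem ha1 hb1, fun y hy => ?_, fun z hz w hw => ?_⟩
    · rw [add_lie]
      exact n.add_mem (ha2 y hy) (hb2 y hy)
    · rw [add_lie, add_lie]
      exact n.add_mem (ha3 z hz w hw) (hb3 z hz w hw)
  zero_mem' := by
    refine ⟨gs.zero_mem, fun y hy => ?_, fun z hz w hw => ?_⟩
    · rw [zero_lie]; exact n.zero_mem
    · rw [zero_lie, zero_lie]; exact n.zero_mem
  smul_mem' := by
    intro c x hx
    obtain ⟨h1, h2, h3⟩ := hx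
    refine ⟨gs.smul_mem c h1, fun y hy => ?_, fun z hz w hw => ?_⟩
    · rw [smul_lie]; exact n.smul_mem c (h2 y hy)
    · rw [smul_lie, smul_lie]; exact n.smul_mem c (h3 z hz w hw)

/-
If `y ∈ g_η` and `[x, y] = 0`, then `[x^{[2]}, y] = [x, [x, y]] = 0`. Writing `x^{[2]} = s + m` with
`s ∈ t` and `m ∈ n`, this says `[m, y] = -η(s) y`. Since `m` is 2-nilpotent, `ad m` is
nilpotent (the `k`-th iterate of the 2-map at `m` has adjoint `(ad m)^{2^k}`), so its only
eigenvalue is `0`; as `η(s) ≠ 0`, `y = 0`.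
-/

theorem Module.End.eq_zero_of_isNilpotent_of_apply_eq_smul {K V : Type*} [Field K]
    [AddCommGroup V] [Module K V] {f : Module.End K V} (hf : IsNilpotent f) {μ : K} (hμ : μ ≠ 0)
    {v : V} (hv : f v = μ • v) : v = 0 := by
  by_contra hv0
  have hμf : f.HasEigenvalue μ :=
    Module.End.hasEigenvalue_of_hasEigenvector
      (Module.End.hasEigenvector_iff.2 ⟨Module.End.mem_eigenspace_iff.2 hv, hv0⟩)
  exact hμ (hμf.isNilpotent_of_isNilpotent hf).eq_zero

theorem lie_mem_rootSpace_add {F : Type*} [Field F] {g : Type*} [LieRing g] [LieAlgebra F g]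
    {t : LieSubalgebra F g} {ξ η : Module.Dual F t} {x y : g} (hx : x ∈ rootSpace t ξ)
    (hy : y ∈ rootSpace t η) : ⁅x, y⁆ ∈ rootSpace t (ξ + η) := by
  intro u
  rw [leibniz_lie, hx u, hy u, smul_lie, lie_smul, ← add_smul]
  rfl

namespace IsTwoMap

variable {F : Type*} [Field F] {g : Type*} [LieRing g] [LieAlgebra F g] {p : g → g}

theorem ad_apply (hp : IsTwoMap F p) (x : g) :
    LieAlgebra.ad F g (p x) = LieAlgebra.ad F g x * LieAlgebra.ad F g x :=
  LinearMap.ext (hp.ad_pow x)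

theorem ad_iterate (hp : IsTwoMap F p) (x : g) (k : ℕ) :
    LieAlgebra.ad F g (p^[k] x) = LieAlgebra.ad F g x ^ 2 ^ k := by
  induction k with
  | zero => simp
  | succ k ih =>
    rw [Function.iterate_succ_apply', hp.ad_apply, ih, ← pow_add, ← two_mul, pow_succ']

theorem isNilpotent_ad (hp : IsTwoMap F p) {x : g} (hx : IsTwoNilpotent p x) :
    IsNilpotent (LieAlgebra.ad F g x) := by
  obtain ⟨k, hk⟩ := hx
  exact ⟨2 ^ k, by rw [← hp.ad_iterate, hk, map_zero]⟩

end IsTwoMap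

theorem statement4_general
    {F : Type*} [Field F]
    {g : Type*} [LieRing g] [LieAlgebra F g]
    (p : g → g) (hp : IsTwoMap F p)
    (t : LieSubalgebra F g)
    (n : Submodule F g)
    (hn : ∀ x : g, x ∈ n ↔ x ∈ rootSpace t 0 ∧ IsTwoNilpotent p x)
    (ξ η : Module.Dual F t)
    (x : g) (hx : x ∈ rootSpace t ξ)
    (hxk : ∃ s : t, ∃ m ∈ n, p x = (s : g) + m ∧ η s ≠ 0) :
    (∀ y ∈ rootSpace t η, ⁅x, y⁆ ∈ rootSpace t (ξ + η)) ∧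
      ∀ y ∈ rootSpace t η, ⁅x, y⁆ = 0 → y = 0 := by
  refine ⟨fun y hy => lie_mem_rootSpace_add hx hy, fun y hy hxy => ?_⟩
  obtain ⟨s, m, hm, hpx, hs⟩ := hxk
  have hpxy : ⁅p x, y⁆ = 0 := by rw [hp.ad_pow, hxy, lie_zero]
  have hmy : LieAlgebra.ad F g m y = (-η s) • y := by
    rw [hpx, add_lie, hy s] at hpxy
    rw [LieAlgebra.ad_apply, neg_smul, eq_neg_iff_add_eq_zero, add_comm, hpxy]
  exact Module.End.eq_zero_of_isNilpotent_of_apply_eq_smul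
    (hp.isNilpotent_ad ((hn m).1 hm).2) (neg_ne_zero.2 hs) hmy

/-- if `x ∈ g_ξ` with `η (x^{[2]}) ≠ 0` (with `η` extended to `h = t ⊕ n`
by `η|_n = 0`), then `ad x` restricts to an injective linear map `g_η → g_{ξ+η}`. -/
theorem statement4
    {F : Type*} [Field F] [IsAlgClosed F] [CharP F 2]
    {g : Type*} [LieRing g] [LieAlgebra F g] [FiniteDimensional F g]
    (p : g → g) (hp : IsTwoMap F p)
    (t : LieSubalgebra F g) (hmax : IsMaxTorus F p t)
    (n : Submodule F g)
    (hn : ∀ x : g, x ∈ n ↔ x ∈ rootSpace t 0 ∧ IsTwoNilpotent p x)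
    (hstd : ∀ x ∈ rootSpace t 0, ∀ y ∈ n, ⁅x, y⁆ ∈ n)
    (hdecomp : rootSpace t 0 = t.toSubmodule ⊔ n)
    (hdisj : Disjoint t.toSubmodule n)
    (ξ η : Module.Dual F t) (hξ : ξ ∈ rootSet t) (hη : η ∈ rootSet t) (hne : ξ ≠ η)
    (x : g) (hx : x ∈ rootSpace t ξ)
    (hxk : ∃ s : t, ∃ m ∈ n, p x = (s : g) + m ∧ η s ≠ 0) :
    (∀ y ∈ rootSpace t η, ⁅x, y⁆ ∈ rootSpace t (ξ + η)) ∧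
      ∀ y ∈ rootSpace t η, ⁅x, y⁆ = 0 → y = 0 :=
  statement4_general p hp t n hn ξ η x hx hxk
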